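/- Let τ ∈ F be a CM point, Δ < 0 a discriminant, and 0 < ε < 1/4. Then the number C_ε(τ,Δ) of imaginary quadratic numbers z of discriminant Δ with |z − τ| < ε satisfies C_ε(τ,Δ) ≤ F·( (48+16√3)/3 · (σ₁(f̃)/f̃)·|Δ|^{1/2}ε² + (12+4√3)/3 · |Δ|^{1/2}ε + 8|Δ|^{1/4}/(√3−1)^{1/2} · σ₀(f̃)·ε + 2 ), where F = max{2^{ω(a)} : 1 ≤ a ≤ |Δ|^{1/2}}. -/

import Mathlib

/-- `z` is an imaginary quadratic number of discriminant `Δ` in the upper half plane: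
`z = (b + i√|Δ|)/(2a)` with `(a,b,c)` a primitive positive definite form of discriminant `Δ`. -/
def IsCMOfDisc (Δ : ℤ) (z : ℂ) : Prop :=
  ∃ a b c : ℤ, 0 < a ∧ Int.gcd (Int.gcd a b) c = 1 ∧ b ^ 2 - 4 * a * c = Δ ∧
    z = ((b : ℂ) + Complex.I * (Real.sqrt |(Δ : ℝ)| : ℝ)) / (2 * (a : ℂ))

/-- The (closed) standard fundamental domain for `SL₂(ℤ)` acting on the upper half plane. -/
def inFundDomain (z : ℂ) : Prop :=
  0 < z.im ∧ 1 ≤ ‖z‖ ∧ |z.re| ≤ 1 / 2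

/-- `F(Δ) = max {2^{ω(a)} : 1 ≤ a ≤ |Δ|^{1/2}}`. -/
def Fmax (Δ : ℤ) : ℕ :=
  Finset.sup (Finset.Icc 1 (Int.natAbs Δ).sqrt) fun a => 2 ^ a.primeFactors.card

/-- `D` is a fundamental discriminant. -/
def IsFundDisc (D : ℤ) : Prop :=
  (D % 4 = 1 ∧ Squarefree D) ∨
    (∃ m : ℤ, D = 4 * m ∧ (m % 4 = 2 ∨ m % 4 = 3) ∧ Squarefree m)

open Finset
open scoped ArithmeticFunction.sigma

/-!
A CM point `z = (b + i√|Δ|)/(2a)` with `‖z - τ‖ < ε` has `a` in an interval `(α, β)` of length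
`O(√|Δ| ε)` and `b` in an interval of length `4aε` with `b² ≡ Δ (mod 4a)`. Writing `b = b₀ + 2u`
for a fixed solution `b₀`, the congruence becomes `a ∣ u (u + b₀)`. For each `p ^ e ∥ a`, one of the
two factors takes all but `γ ≤ e / 2` of the factors `p`, where `p ^ γ ∣ b₀`; so the solutions lie
in at most `2 ^ ω(a)` classes modulo `2a / g`, with `g = ∏ p ^ γ` satisfying `g ∣ b₀` and `g² ∣ a`.
Then `g² ∣ Δ`, and since `D` is fundamental this forces `g ∣ f̃`. Summing the row bound
`2 ^ ω(a) (2gε + 1)` over `a`, grouped by `g = d ∣ f̃` (the `a` with `d² ∣ a` are `d²` apart and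
`d ≤ √β`), gives `F (2ε ((β - α) σ₁(f̃)/f̃ + √β σ₀(f̃)) + (β - α) + 1)`.
-/

theorem Int.card_Icc_ceil_floor_le {u v : ℝ} (huv : u ≤ v) :
    (#(Icc ⌈u⌉ ⌊v⌋) : ℝ) ≤ v - u + 1 := by
  have : ((⌊v⌋ + 1 - ⌈u⌉).toNat : ℝ) = ((max (⌊v⌋ + 1 - ⌈u⌉) 0 : ℤ) : ℝ) := by
    rw [← Int.toNat_eq_max, Int.cast_natCast]
  rw [Int.card_Icc, this, Int.cast_max, max_le_iff]
  push_cast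
  exact ⟨by linarith [Int.floor_le v, Int.le_ceil u], by linarith⟩

theorem Int.card_le_of_dvd_sub (I : Finset ℤ) {u v : ℝ} (huv : u ≤ v) {m : ℕ} (hm : 0 < m)
    (r : ℤ) (hI : ∀ b ∈ I, u ≤ b ∧ b ≤ v ∧ (m : ℤ) ∣ b - r) :
    (#I : ℝ) ≤ (v - u) / m + 1 := by
  have hm' : (0 : ℝ) < m := by exact_mod_cast hm
  have hinj : Set.InjOn (fun b : ℤ => (b - r) / m) I := by
    intro b hb b' hb' h
    have h1 := Int.ediv_mul_cancel (hI b hb).2.2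
    have h2 := Int.ediv_mul_cancel (hI b' hb').2.2
    simp only at h
    linear_combination (m : ℤ) * h - h1 + h2
  have hsub : I.image (fun b : ℤ => (b - r) / m) ⊆ Icc ⌈(u - r) / m⌉ ⌊(v - r) / m⌋ := by
    simp only [subset_iff, mem_image, mem_Icc, forall_exists_index, and_imp]
    rintro _ b hb rfl
    obtain ⟨hu, hv, k, hk⟩ := hI b hb
    have hb' : (b : ℝ) = r + m * k := by exact_mod_cast (by omega : b = r + m * k)
    rw [hk, Int.mul_ediv_cancel_left _ (by exact_mod_cast hm.ne'), Int.ceil_le, Int.le_floor,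
      div_le_iff₀ hm', le_div_iff₀ hm']
    constructor <;> nlinarith
  calc (#I : ℝ) = #(I.image fun b : ℤ => (b - r) / m) := by rw [card_image_of_injOn hinj]
    _ ≤ #(Icc ⌈(u - r) / m⌉ ⌊(v - r) / m⌋) := by exact_mod_cast card_le_card hsub
    _ ≤ (v - r) / m - (u - r) / m + 1 :=
      Int.card_Icc_ceil_floor_le (div_le_div_of_nonneg_right (by linarith) hm'.le)
    _ = (v - u) / m + 1 := by ring

theorem Finset.card_le_of_forall_dvd (A : Finset ℕ) {u v : ℝ} (huv : u ≤ v) {m : ℕ}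
    (hm : 0 < m) (hA : ∀ a ∈ A, u ≤ a ∧ a ≤ v ∧ m ∣ a) :
    (#A : ℝ) ≤ (v - u) / m + 1 := by
  rw [← card_map (Nat.castEmbedding : ℕ ↪ ℤ)]
  refine Int.card_le_of_dvd_sub _ huv hm 0 ?_
  simp only [mem_map, Nat.castEmbedding_apply, forall_exists_index, and_imp]
  rintro _ a ha rfl
  simpa [Int.natCast_dvd_natCast] using hA a ha

theorem Int.card_le_of_fiber_dvd_sub {κ : Type*} [DecidableEq κ] (R : Finset ℤ) {lo hi : ℝ}
    (hlohi : lo ≤ hi) (hR : ∀ b ∈ R, lo ≤ b ∧ b ≤ hi) {m : ℕ} (hm : 0 < m) (φ : ℤ → κ)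
    (T : Finset κ) (hφ : ∀ b ∈ R, φ b ∈ T)
    (hfib : ∀ b ∈ R, ∀ b' ∈ R, φ b = φ b' → (m : ℤ) ∣ b - b') :
    (#R : ℝ) ≤ #T * ((hi - lo) / m + 1) := by
  have hfiber : ∀ t ∈ T, (#{b ∈ R | φ b = t} : ℝ) ≤ (hi - lo) / m + 1 := by
    intro t _
    rcases (R.filter (φ · = t)).eq_empty_or_nonempty with h | ⟨r, hr⟩
    · rw [h, card_empty, Nat.cast_zero]
      have : 0 ≤ (hi - lo) / m := div_nonneg (by linarith) (Nat.cast_nonneg m)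
      linarith
    · rw [mem_filter] at hr
      refine Int.card_le_of_dvd_sub _ hlohi hm r fun b hb => ?_
      rw [mem_filter] at hb
      exact ⟨(hR b hb.1).1, (hR b hb.1).2, hfib b hb.1 r hr.1 (hb.2.trans hr.2.symm)⟩
  rw [card_eq_sum_card_fiberwise hφ, Nat.cast_sum]
  calc ∑ t ∈ T, (#{b ∈ R | φ b = t} : ℝ) ≤ ∑ _t ∈ T, ((hi - lo) / m + 1) := sum_le_sum hfiber
    _ = #T * ((hi - lo) / m + 1) := by rw [sum_const, nsmul_eq_mul]

theorem Int.natCast_prod_prime_pow_dvd {s : Finset ℕ} (hs : ∀ p ∈ s, p.Prime) (k : ℕ → ℕ)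
    {n : ℤ} (h : ∀ p ∈ s, (p : ℤ) ^ k p ∣ n) : ((∏ p ∈ s, p ^ k p : ℕ) : ℤ) ∣ n := by
  push_cast
  refine Finset.prod_dvd_of_coprime (fun p hp q hq hpq => ?_) h
  exact (Nat.isCoprime_iff_coprime.2 ((Nat.coprime_primes (hs p hp) (hs q hq)).2 hpq)).pow

theorem Int.pow_dvd_or_pow_dvd_of_pow_dvd_mul {p : ℕ} (hp : p.Prime) {e k : ℕ} {u w : ℤ}
    (h : (p : ℤ) ^ e ∣ u * w) (hk : e ≤ 2 * k + 1 ∨ ¬ (p : ℤ) ^ (k + 1) ∣ w - u) :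
    (p : ℤ) ^ (e - k) ∣ u ∨ (p : ℤ) ^ (e - k) ∣ w := by
  have := Fact.mk hp
  rcases eq_or_ne u 0 with rfl | hu
  · exact Or.inl (dvd_zero _)
  rcases eq_or_ne w 0 with rfl | hw
  · exact Or.inr (dvd_zero _)
  have hmin : e ≤ 2 * k + 1 ∨ padicValInt p u ≤ k ∨ padicValInt p w ≤ k := by
    refine hk.imp_right fun hk => ?_
    by_contra! hlt
    exact hk (dvd_sub ((padicValInt_dvd_iff _ _).2 (Or.inr hlt.2))
      ((padicValInt_dvd_iff _ _).2 (Or.inr hlt.1)))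
  simp only [padicValInt_dvd_iff, hu, hw, mul_eq_zero, false_or] at h ⊢
  rw [padicValInt.mul hu hw] at h
  omega

theorem exists_sign_classes_of_dvd_mul_add {a : ℕ} (ha : a ≠ 0) (x : ℤ) :
    ∃ g M : ℕ, a = g * M ∧ g ^ 2 ∣ a ∧ (g : ℤ) ∣ x ∧ ∃ φ : ℤ → Finset ℕ,
      (∀ u, φ u ∈ a.primeFactors.powerset) ∧
      ∀ u u', (a : ℤ) ∣ u * (u + x) → (a : ℤ) ∣ u' * (u' + x) → φ u = φ u' →
        (M : ℤ) ∣ u - u' := by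
  set s := a.primeFactors
  have hs : ∀ p ∈ s, p.Prime := fun p => Nat.prime_of_mem_primeFactors
  set γ : ℕ → ℕ := fun p => Nat.findGreatest (fun k => (p : ℤ) ^ k ∣ x) (a.factorization p / 2)
  set c : ℕ → ℕ := fun p => a.factorization p - γ p
  have hγ : ∀ p, γ p ≤ a.factorization p / 2 := fun p => Nat.findGreatest_le _
  refine ⟨∏ p ∈ s, p ^ γ p, ∏ p ∈ s, p ^ c p, ?_, ?_, ?_,
    fun u => s.filter fun p : ℕ => (p : ℤ) ^ c p ∣ u,
    fun u => mem_powerset.2 (filter_subset _ _), ?_⟩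
  · rw [← prod_mul_distrib]
    conv_lhs => rw [Nat.prod_primeFactors_pow_factorization ha]
    refine prod_congr rfl fun p _ => ?_
    rw [← pow_add]
    have := hγ p
    simp only [c]
    congr 1
    omega
  · conv_rhs => rw [Nat.prod_primeFactors_pow_factorization ha]
    rw [← prod_pow]
    refine prod_dvd_prod_of_dvd _ _ fun p _ => ?_
    rw [← pow_mul]
    exact pow_dvd_pow _ (by have := hγ p; omega)
  · exact Int.natCast_prod_prime_pow_dvd hs γ fun p _ =>
      Nat.findGreatest_spec (P := fun k => (p : ℤ) ^ k ∣ x) (Nat.zero_le _) (by simp)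
  · intro u u' hu hu' hφ
    beta_reduce at hφ
    have hsign : ∀ v, (a : ℤ) ∣ v * (v + x) → ∀ p ∈ s,
        (p : ℤ) ^ c p ∣ v ∨ (p : ℤ) ^ c p ∣ v + x := by
      intro v hv p hp
      refine Int.pow_dvd_or_pow_dvd_of_pow_dvd_mul (hs p hp)
        ((Int.natCast_dvd_natCast.2 (Nat.ordProj_dvd a p)).trans (by exact_mod_cast hv)) ?_
      rw [add_sub_cancel_left]
      rcases (hγ p).lt_or_eq with hlt | heq
      · exact Or.inr (Nat.findGreatest_is_greatest (Nat.lt_succ_self _) hlt)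
      · left; omega
    refine Int.natCast_prod_prime_pow_dvd hs c fun p hp => ?_
    by_cases hpu : (p : ℤ) ^ c p ∣ u
    · have hpu' : (p : ℤ) ^ c p ∣ u' := by
        have : p ∈ s.filter fun p : ℕ => (p : ℤ) ^ c p ∣ u := mem_filter.2 ⟨hp, hpu⟩
        rw [hφ] at this
        exact (mem_filter.1 this).2
      exact dvd_sub hpu hpu'
    · have hpu' : ¬ (p : ℤ) ^ c p ∣ u' := by
        intro hpu'
        have : p ∈ s.filter fun p : ℕ => (p : ℤ) ^ c p ∣ u' := mem_filter.2 ⟨hp, hpu'⟩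
        rw [← hφ] at this
        exact hpu (mem_filter.1 this).2
      have := dvd_sub ((hsign u hu p hp).resolve_left hpu)
        ((hsign u' hu' p hp).resolve_left hpu')
      rwa [add_sub_add_right_eq_sub] at this

theorem Int.dvd_of_sq_dvd_sq_mul {d n m : ℤ} (hm : Squarefree m) (h : d ^ 2 ∣ n ^ 2 * m) :
    d ∣ n := by
  rcases Nat.eq_zero_or_pos (Int.gcd d n) with h0 | h0
  · simp [(Int.gcd_eq_zero_iff.1 h0).2]
  obtain ⟨g, d', n', hg, hcop, rfl, rfl⟩ := Int.exists_gcd_one' h0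
  have hd' : d' ^ 2 ∣ n' ^ 2 * m := by
    rw [mul_pow, mul_pow, mul_right_comm] at h
    exact (mul_dvd_mul_iff_right (pow_ne_zero 2 (by exact_mod_cast hg.ne'))).1 h
  have hunit : IsUnit d' :=
    hm d' (sq d' ▸ (Int.isCoprime_iff_gcd_eq_one.2 hcop).pow.dvd_of_dvd_mul_left hd')
  exact mul_dvd_mul_right hunit.dvd g

theorem dvd_of_sq_dvd_of_isFundDisc {Δ D : ℤ} {f ftilde : ℕ} (hfact : Δ = (f : ℤ) ^ 2 * D)
    (hD : IsFundDisc D) (hft1 : D % 4 = 1 → ftilde = f) (hft0 : D % 4 = 0 → ftilde = 2 * f)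
    {d : ℕ} (hd : (d : ℤ) ^ 2 ∣ Δ) : d ∣ ftilde := by
  rw [← Int.natCast_dvd_natCast]
  rcases hD with ⟨hD1, hsq⟩ | ⟨m, rfl, -, hsq⟩
  · rw [hft1 hD1]
    exact Int.dvd_of_sq_dvd_sq_mul hsq (hfact ▸ hd)
  · rw [hft0 (by omega)]
    push_cast
    exact Int.dvd_of_sq_dvd_sq_mul hsq (by rw [hfact] at hd; convert hd using 1; ring)

theorem Int.dvd_half_sub_mul_of_four_mul_dvd_sq_sub_sq {a : ℕ} {b b₀ : ℤ}
    (h : 4 * (a : ℤ) ∣ b ^ 2 - b₀ ^ 2) :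
    b - b₀ = 2 * ((b - b₀) / 2) ∧ (a : ℤ) ∣ (b - b₀) / 2 * ((b - b₀) / 2 + b₀) := by
  rw [sq_sub_sq, mul_comm (b + b₀)] at h
  have h2 : (2 : ℤ) ∣ b - b₀ := by
    have : (2 : ℤ) ∣ (b - b₀) * (b + b₀) := dvd_trans ⟨2 * a, by ring⟩ h
    refine (Int.prime_two.dvd_mul.1 this).elim id fun h => ?_
    rw [show b - b₀ = b + b₀ - 2 * b₀ by ring]
    exact dvd_sub h (dvd_mul_right _ _)
  obtain ⟨u, hu⟩ := h2
  rw [hu, Int.mul_ediv_cancel_left _ two_ne_zero]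
  refine ⟨rfl, (mul_dvd_mul_iff_left (four_ne_zero' ℤ)).1 ?_⟩
  rwa [show b + b₀ = b - b₀ + 2 * b₀ by ring, hu,
    show 2 * u * (2 * u + 2 * b₀) = 4 * (u * (u + b₀)) by ring] at h

theorem exists_card_sq_congr_le {Δ : ℤ} {n : ℕ} (hkey : ∀ d : ℕ, (d : ℤ) ^ 2 ∣ Δ → d ∣ n)
    {a : ℕ} (ha : 0 < a) {lo hi : ℝ} (hlohi : lo ≤ hi) (R : Finset ℤ)
    (hR : ∀ b ∈ R, lo ≤ b ∧ b ≤ hi ∧ 4 * (a : ℤ) ∣ b ^ 2 - Δ) :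
    ∃ g : ℕ, g ∣ n ∧ g ^ 2 ∣ a ∧
      (#R : ℝ) ≤ 2 ^ #a.primeFactors * ((hi - lo) * g / (2 * a) + 1) := by
  rcases R.eq_empty_or_nonempty with rfl | ⟨b₀, hb₀⟩
  · refine ⟨1, one_dvd _, one_dvd _, ?_⟩
    have : 0 ≤ hi - lo := sub_nonneg.2 hlohi
    rw [card_empty, Nat.cast_zero]
    positivity
  obtain ⟨g, M, haM, hga, hgb₀, φ, hφ, hfib⟩ := exists_sign_classes_of_dvd_mul_add ha.ne' b₀
  have hM : 0 < M := Nat.pos_of_mul_pos_left (haM ▸ ha)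
  have hhalf : ∀ b ∈ R, b - b₀ = 2 * ((b - b₀) / 2) ∧
      (a : ℤ) ∣ (b - b₀) / 2 * ((b - b₀) / 2 + b₀) := fun b hb =>
    Int.dvd_half_sub_mul_of_four_mul_dvd_sq_sub_sq <| by
      simpa using dvd_sub (hR b hb).2.2 (hR b₀ hb₀).2.2
  have hcount := Int.card_le_of_fiber_dvd_sub R hlohi
    (fun b hb => ⟨(hR b hb).1, (hR b hb).2.1⟩) (m := 2 * M) (by positivity)
    (fun b => φ ((b - b₀) / 2)) a.primeFactors.powerset (fun _ _ => hφ _)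
    (fun b hb b' hb' h => by
      have hMu := hfib _ _ (hhalf b hb).2 (hhalf b' hb').2 h
      rw [show b - b' = (b - b₀) - (b' - b₀) by ring, (hhalf b hb).1, (hhalf b' hb').1,
        ← mul_sub]
      push_cast
      exact mul_dvd_mul_left 2 hMu)
  refine ⟨g, hkey g ?_, hga, ?_⟩
  · have hg4a : (g : ℤ) ^ 2 ∣ 4 * a := by exact_mod_cast hga.trans (dvd_mul_left a 4)
    have hsq : (g : ℤ) ^ 2 ∣ b₀ ^ 2 - Δ := hg4a.trans (hR b₀ hb₀).2.2
    simpa using dvd_sub (pow_dvd_pow_of_dvd hgb₀ 2) hsq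
  · rw [card_powerset, Nat.cast_pow, Nat.cast_two] at hcount
    convert hcount using 3
    have hg : (g : ℝ) ≠ 0 := by exact_mod_cast (Nat.pos_of_mul_pos_right (haM ▸ ha)).ne'
    rw [haM]
    push_cast
    field_simp

theorem Nat.sum_divisors_inv (n : ℕ) :
    ∑ d ∈ n.divisors, (d : ℝ)⁻¹ = σ 1 n / n := by
  rw [← Nat.sum_div_divisors n fun d => (d : ℝ)⁻¹, ArithmeticFunction.sigma_one_apply,
    Nat.cast_sum, sum_div]
  refine sum_congr rfl fun d hd => ?_
  have hd0 : (d : ℝ) ≠ 0 := by exact_mod_cast (Nat.pos_of_mem_divisors hd).ne'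
  rw [Nat.cast_div (Nat.dvd_of_mem_divisors hd) hd0, inv_div]

theorem card_mul_le_of_sq_dvd (A : Finset ℕ) {α β : ℝ} (hα : 0 ≤ α) (hαβ : α ≤ β) {d : ℕ}
    (hd : 0 < d) (hA : ∀ a ∈ A, α < a ∧ a < β ∧ d ^ 2 ∣ a) :
    (#A : ℝ) * d ≤ (β - α) / d + √β := by
  rcases A.eq_empty_or_nonempty with rfl | ⟨a₀, ha₀⟩
  · rw [card_empty, Nat.cast_zero, zero_mul]
    have : 0 ≤ (β - α) / d := div_nonneg (by linarith) (Nat.cast_nonneg d)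
    positivity
  have hdβ : (d : ℝ) ≤ √β := by
    obtain ⟨hα₀, hβ₀, hd₀⟩ := hA a₀ ha₀
    have : ((d ^ 2 : ℕ) : ℝ) ≤ a₀ := by
      exact_mod_cast Nat.le_of_dvd (by exact_mod_cast hα.trans_lt hα₀) hd₀
    exact Real.le_sqrt_of_sq_le (by push_cast at this; linarith)
  have hcard := Finset.card_le_of_forall_dvd A hαβ (m := d ^ 2) (by positivity)
    fun a ha => ⟨(hA a ha).1.le, (hA a ha).2.1.le, (hA a ha).2.2⟩
  calc (#A : ℝ) * d ≤ ((β - α) / (d ^ 2 : ℕ) + 1) * d :=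
        mul_le_mul_of_nonneg_right hcard (Nat.cast_nonneg d)
    _ = (β - α) / d + d := by
        have : (d : ℝ) ≠ 0 := by exact_mod_cast hd.ne'
        push_cast
        field_simp
    _ ≤ (β - α) / d + √β := by linarith

theorem sum_le_of_dvd_of_sq_dvd (A : Finset ℕ) {α β : ℝ} (hα : 0 ≤ α) (hαβ : α ≤ β)
    (hA : ∀ a ∈ A, α < a ∧ a < β) {n : ℕ} (hn : n ≠ 0) (G : ℕ → ℕ)
    (hG : ∀ a ∈ A, G a ∣ n ∧ G a ^ 2 ∣ a) :
    ∑ a ∈ A, (G a : ℝ) ≤ (β - α) * (σ 1 n / n) + √β * σ 0 n := by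
  have hmaps : ∀ a ∈ A, G a ∈ n.divisors := fun a ha => Nat.mem_divisors.2 ⟨(hG a ha).1, hn⟩
  rw [← sum_fiberwise_of_maps_to hmaps]
  calc ∑ d ∈ n.divisors, ∑ a ∈ A with G a = d, (G a : ℝ)
      = ∑ d ∈ n.divisors, (#{a ∈ A | G a = d} : ℝ) * d := by
        refine sum_congr rfl fun d _ => ?_
        rw [sum_congr rfl fun a ha => by rw [(mem_filter.1 ha).2], sum_const, nsmul_eq_mul]
    _ ≤ ∑ d ∈ n.divisors, ((β - α) / d + √β) := by
        refine sum_le_sum fun d hd => card_mul_le_of_sq_dvd _ hα hαβ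
          (Nat.pos_of_mem_divisors hd) fun a ha => ?_
        rw [mem_filter] at ha
        exact ⟨(hA a ha.1).1, (hA a ha.1).2, ha.2 ▸ (hG a ha.1).2⟩
    _ = (β - α) * ∑ d ∈ n.divisors, (d : ℝ)⁻¹ + √β * #n.divisors := by
        rw [sum_add_distrib, mul_sum, sum_const, nsmul_eq_mul, mul_comm (√β)]
        rfl
    _ = (β - α) * (σ 1 n / n) + √β * σ 0 n := by
        rw [Nat.sum_divisors_inv, ArithmeticFunction.sigma_zero_apply]

theorem IsCMOfDisc.exists_eq_mk {Δ : ℤ} {z : ℂ} (hz : IsCMOfDisc Δ z) :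
    ∃ (a : ℕ) (b : ℤ), 0 < a ∧ 4 * (a : ℤ) ∣ b ^ 2 - Δ ∧
      z = ⟨b / (2 * a), √|(Δ : ℝ)| / (2 * a)⟩ := by
  obtain ⟨a, b, c, ha, -, hdisc, rfl⟩ := hz
  lift a to ℕ using ha.le
  refine ⟨a, b, by exact_mod_cast ha, ⟨c, by linear_combination hdisc⟩, ?_⟩
  have h2a : (2 * ((a : ℤ) : ℂ)) = ((2 * a : ℝ) : ℂ) := by push_cast; ring
  rw [h2a]
  apply Complex.ext
  · rw [Complex.div_ofReal_re]; simp
  · rw [Complex.div_ofReal_im]; simp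

theorem inFundDomain.sqrt_three_div_two_le_im {τ : ℂ} (hτ : inFundDomain τ) :
    √3 / 2 ≤ τ.im := by
  obtain ⟨him, hnorm, hre⟩ := hτ
  have h1 : 1 ≤ τ.re ^ 2 + τ.im ^ 2 := by
    rw [show τ.re ^ 2 + τ.im ^ 2 = ‖τ‖ ^ 2 by rw [Complex.sq_norm, Complex.normSq_apply]; ring]
    nlinarith
  have h2 : τ.re ^ 2 ≤ 1 / 4 := by
    rw [← sq_abs]; nlinarith [abs_nonneg τ.re]
  nlinarith [Real.sq_sqrt (show (0 : ℝ) ≤ 3 by norm_num), Real.sqrt_nonneg 3]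

theorem card_isCMOfDisc_near_le {Δ : ℤ} {n : ℕ} (hn : n ≠ 0)
    (hkey : ∀ d : ℕ, (d : ℤ) ^ 2 ∣ Δ → d ∣ n) (τ : ℂ) {ε α β : ℝ} (hε : 0 < ε) (hα : 0 ≤ α)
    (hαβ : α ≤ β) (hβ : β ≤ √|(Δ : ℝ)|)
    (hnear : ∀ a : ℕ, 0 < a → |√|(Δ : ℝ)| / (2 * a) - τ.im| < ε → α < a ∧ a < β) :
    (Nat.card {z : ℂ | IsCMOfDisc Δ z ∧ ‖z - τ‖ < ε} : ℝ) ≤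
      Fmax Δ * (2 * ε * ((β - α) * (σ 1 n / n) + √β * σ 0 n) + (β - α) + 1) := by
  classical
  set A : Finset ℕ := {a ∈ Icc 1 Δ.natAbs.sqrt | α < a ∧ a < β}
  set row : ℕ → Finset ℤ := fun a =>
    {b ∈ Icc ⌈2 * a * (τ.re - ε)⌉ ⌊2 * a * (τ.re + ε)⌋ | 4 * (a : ℤ) ∣ b ^ 2 - Δ}
  have hcover : {z : ℂ | IsCMOfDisc Δ z ∧ ‖z - τ‖ < ε} ⊆
      ↑(A.biUnion fun a =>
        (row a).image fun b : ℤ => (⟨b / (2 * a), √|(Δ : ℝ)| / (2 * a)⟩ : ℂ)) := by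
    rintro z ⟨hz, hzτ⟩
    obtain ⟨a, b, ha, hab, rfl⟩ := hz.exists_eq_mk
    have har : (0 : ℝ) < a := by exact_mod_cast ha
    have him := (Complex.abs_im_le_norm _).trans_lt hzτ
    have hre := abs_lt.1 ((Complex.abs_re_le_norm _).trans_lt hzτ)
    simp only [Complex.sub_im, Complex.sub_re] at him hre
    obtain ⟨hαa, haβ⟩ := hnear a ha him
    have hsqrt : a ≤ Δ.natAbs.sqrt := by
      rw [← Real.nat_floor_real_sqrt_eq_nat_sqrt, Nat.cast_natAbs, Int.cast_abs]
      exact Nat.le_floor (haβ.le.trans hβ)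
    have hb : (b : ℝ) = 2 * a * (b / (2 * a)) := by field_simp
    simp only [coe_biUnion, coe_image, Set.mem_iUnion, Set.mem_image, mem_coe]
    refine ⟨a, mem_filter.2 ⟨mem_Icc.2 ⟨ha, hsqrt⟩, hαa, haβ⟩, b,
      mem_filter.2 ⟨mem_Icc.2 ⟨Int.ceil_le.2 (by rw [hb]; nlinarith),
        Int.le_floor.2 (by rw [hb]; nlinarith)⟩, hab⟩,
      rfl⟩
  have hrow : ∀ a ∈ A, ∃ g : ℕ, g ∣ n ∧ g ^ 2 ∣ a ∧
      (#(row a) : ℝ) ≤ Fmax Δ * (2 * g * ε + 1) := by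
    intro a ha
    obtain ⟨ha1, ha2⟩ := mem_Icc.1 (mem_filter.1 ha).1
    have har : (0 : ℝ) < a := by exact_mod_cast ha1
    obtain ⟨g, hgn, hga, hcard⟩ := exists_card_sq_congr_le hkey ha1
      (lo := 2 * a * (τ.re - ε)) (hi := 2 * a * (τ.re + ε)) (by nlinarith) (row a)
      fun b hb => by
        obtain ⟨hb, hdvd⟩ := mem_filter.1 hb
        obtain ⟨hlo, hhi⟩ := mem_Icc.1 hb
        exact ⟨Int.ceil_le.1 hlo, Int.le_floor.1 hhi, hdvd⟩
    have hlen : (2 * a * (τ.re + ε) - 2 * a * (τ.re - ε)) * g / (2 * a) = 2 * g * ε := by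
      field_simp
      ring
    have hF : (2 : ℝ) ^ #a.primeFactors ≤ Fmax Δ := by
      exact_mod_cast le_sup (f := fun a : ℕ => 2 ^ a.primeFactors.card) (mem_Icc.2 ⟨ha1, ha2⟩)
    rw [hlen] at hcard
    exact ⟨g, hgn, hga, hcard.trans (mul_le_mul_of_nonneg_right hF (by positivity))⟩
  choose! G hG using hrow
  have hA : ∀ a ∈ A, α < a ∧ a < β := fun a ha => (mem_filter.1 ha).2
  calc (Nat.card {z : ℂ | IsCMOfDisc Δ z ∧ ‖z - τ‖ < ε} : ℝ)
      ≤ ∑ a ∈ A, (#(row a) : ℝ) := by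
        rw [Nat.card_coe_set_eq, ← Nat.cast_sum]
        refine Nat.cast_le.2 ((Set.ncard_le_ncard hcover (finite_toSet _)).trans ?_)
        rw [Set.ncard_coe_finset]
        exact card_biUnion_le.trans (sum_le_sum fun a _ => card_image_le)
    _ ≤ ∑ a ∈ A, Fmax Δ * (2 * G a * ε + 1) := sum_le_sum fun a ha => (hG a ha).2.2
    _ = Fmax Δ * (2 * ε * ∑ a ∈ A, (G a : ℝ) + #A) := by
        rw [← mul_sum, sum_add_distrib, mul_sum, sum_const, nsmul_one]
        congr 2
        exact sum_congr rfl fun a _ => by ring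
    _ ≤ Fmax Δ * (2 * ε * ((β - α) * (σ 1 n / n) + √β * σ 0 n) + ((β - α) + 1)) := by
        gcongr
        · exact sum_le_of_dvd_of_sq_dvd A hα hαβ hA hn G fun a ha => ⟨(hG a ha).1, (hG a ha).2.1⟩
        · refine (Finset.card_le_of_forall_dvd A hαβ one_pos fun a ha =>
            ⟨(hA a ha).1.le, (hA a ha).2.le, one_dvd _⟩).trans_eq ?_
          rw [Nat.cast_one, div_one]
    _ = Fmax Δ * (2 * ε * ((β - α) * (σ 1 n / n) + √β * σ 0 n) + (β - α) + 1) := by ring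

theorem card_isCMOfDisc_near_le_of_sqrt_three_div_two_le_im {Δ : ℤ} {n : ℕ} (hn : n ≠ 0)
    (hkey : ∀ d : ℕ, (d : ℤ) ^ 2 ∣ Δ → d ∣ n) {τ : ℂ} (ht : √3 / 2 ≤ τ.im) {ε : ℝ}
    (hε0 : 0 < ε) (hε : ε < 1 / 4) :
    (Nat.card {z : ℂ | IsCMOfDisc Δ z ∧ ‖z - τ‖ < ε} : ℝ) ≤
      Fmax Δ * (4 * (σ 1 n / n) * √|(Δ : ℝ)| * ε ^ 2 + 2 * √|(Δ : ℝ)| * ε +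
        2 * |(Δ : ℝ)| ^ ((1 : ℝ) / 4) * σ 0 n * ε + 1) := by
  have h3 : √3 ^ 2 = 3 := Real.sq_sqrt zero_le_three
  have ht2 : 3 / 4 ≤ τ.im ^ 2 := by nlinarith [Real.sqrt_nonneg 3]
  have htε : 1 / 2 ≤ τ.im - ε := by nlinarith [Real.sqrt_nonneg 3]
  set s := √|(Δ : ℝ)| with hs
  have hs0 : 0 ≤ s := Real.sqrt_nonneg _
  set α := s / (2 * (τ.im + ε))
  set β := s / (2 * (τ.im - ε))
  have hβs : β ≤ s := div_le_self hs0 (by linarith)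
  have hcount := card_isCMOfDisc_near_le hn hkey τ hε0 (α := α) (β := β)
    (div_nonneg hs0 (by linarith)) (div_le_div_of_nonneg_left hs0 (by linarith) (by linarith))
    hβs fun a ha h => by
      have har : (0 : ℝ) < 2 * a := by positivity
      obtain ⟨h1, h2⟩ := abs_lt.1 h
      rw [lt_sub_iff_add_lt, ← sub_eq_neg_add, lt_div_iff₀ har] at h1
      rw [sub_lt_iff_lt_add', div_lt_iff₀ har] at h2
      rw [div_lt_iff₀ (by linarith), lt_div_iff₀ (by linarith)]
      constructor <;> linarith
  have hβα : β - α ≤ 2 * s * ε := by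
    rw [div_sub_div _ _ (by linarith) (by linarith), div_le_iff₀ (by nlinarith)]
    have : 0 ≤ 2 * (τ.im ^ 2 - ε ^ 2) - 1 := by nlinarith
    nlinarith [mul_nonneg (mul_nonneg hs0 hε0.le) this]
  have hsqrtβ : √β ≤ |(Δ : ℝ)| ^ ((1 : ℝ) / 4) := by
    calc √β ≤ √s := Real.sqrt_le_sqrt hβs
      _ = |(Δ : ℝ)| ^ ((1 : ℝ) / 4) := by
        rw [hs, Real.sqrt_eq_rpow, Real.sqrt_eq_rpow, ← Real.rpow_mul (abs_nonneg _)]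
        norm_num
  refine hcount.trans (mul_le_mul_of_nonneg_left ?_ (Nat.cast_nonneg _))
  have hσ1 : 0 ≤ (σ 1 n : ℝ) / n := by positivity
  have hσ0 : 0 ≤ (σ 0 n : ℝ) := by positivity
  nlinarith [mul_le_mul_of_nonneg_right hβα (mul_nonneg hε0.le hσ1),
    mul_le_mul_of_nonneg_right hsqrtβ (mul_nonneg hε0.le hσ0)]

theorem stmt6_general (Δ D : ℤ) (f : ℕ) (hf : 0 < f)
    (hfact : Δ = (f : ℤ) ^ 2 * D) (hD : IsFundDisc D)
    (ftilde : ℕ) (hft1 : D % 4 = 1 → ftilde = f) (hft0 : D % 4 = 0 → ftilde = 2 * f)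
    (τ : ℂ) (hτ : inFundDomain τ)
    (ε : ℝ) (hε0 : 0 < ε) (hε : ε < 1 / 4) :
    (Nat.card {z : ℂ | IsCMOfDisc Δ z ∧ ‖z - τ‖ < ε} : ℝ) ≤
      (Fmax Δ : ℝ) *
        ((48 + 16 * Real.sqrt 3) / 3 * (((ArithmeticFunction.sigma 1) ftilde : ℝ) / (ftilde : ℝ)) *
            Real.sqrt |(Δ : ℝ)| * ε ^ 2 +
          (12 + 4 * Real.sqrt 3) / 3 * Real.sqrt |(Δ : ℝ)| * ε +
          8 * |(Δ : ℝ)| ^ ((1 : ℝ) / 4) / Real.sqrt (Real.sqrt 3 - 1) *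
            ((ArithmeticFunction.sigma 0) ftilde : ℝ) * ε +
          2) := by
  have hft : ftilde ≠ 0 := by
    rcases hD with ⟨hD1, -⟩ | ⟨m, rfl, -⟩
    · rw [hft1 hD1]; exact hf.ne'
    · rw [hft0 (by omega)]; omega
  refine (card_isCMOfDisc_near_le_of_sqrt_three_div_two_le_im hft
    (fun d => dvd_of_sq_dvd_of_isFundDisc hfact hD hft1 hft0) hτ.sqrt_three_div_two_le_im hε0
    hε).trans (mul_le_mul_of_nonneg_left ?_ (Nat.cast_nonneg _))
  have h3 : 0 ≤ √3 := Real.sqrt_nonneg 3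
  have hq : 0 ≤ |(Δ : ℝ)| ^ ((1 : ℝ) / 4) := by positivity
  have hC3 : 2 * |(Δ : ℝ)| ^ ((1 : ℝ) / 4) ≤ 8 * |(Δ : ℝ)| ^ ((1 : ℝ) / 4) / √(√3 - 1) := by
    have hr : √(√3 - 1) ≤ 1 := Real.sqrt_le_one.2 (by nlinarith [Real.sq_sqrt zero_le_three])
    have hr0 : 0 < √(√3 - 1) := Real.sqrt_pos.2 (by nlinarith [Real.sq_sqrt zero_le_three])
    linarith [le_div_self (by positivity : 0 ≤ 8 * |(Δ : ℝ)| ^ ((1 : ℝ) / 4)) hr0 hr]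
  have hσ1 : 0 ≤ (σ 1 ftilde : ℝ) / ftilde := by positivity
  have hs : 0 ≤ √|(Δ : ℝ)| := Real.sqrt_nonneg _
  gcongr ?_ + ?_ + ?_ + ?_
  · nlinarith [mul_nonneg (mul_nonneg hσ1 hs) (sq_nonneg ε)]
  · nlinarith [mul_nonneg hs hε0.le]
  · exact mul_le_mul_of_nonneg_right (mul_le_mul_of_nonneg_right hC3 (Nat.cast_nonneg _)) hε0.le
  · norm_num

/-- The counting bound for `C_ε(τ,Δ)`, Theorem 3.1. -/
theorem stmt6 (Δ D : ℤ) (f : ℕ) (hf : 0 < f) (hΔneg : Δ < 0)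
    (hΔmod : Δ % 4 = 0 ∨ Δ % 4 = 1)
    (hfact : Δ = (f : ℤ) ^ 2 * D) (hD : IsFundDisc D)
    (ftilde : ℕ) (hft1 : D % 4 = 1 → ftilde = f) (hft0 : D % 4 = 0 → ftilde = 2 * f)
    (τ : ℂ) (hτ : inFundDomain τ) (hτCM : ∃ Δ' : ℤ, IsCMOfDisc Δ' τ)
    (ε : ℝ) (hε0 : 0 < ε) (hε : ε < 1 / 4) :
    (Nat.card {z : ℂ | IsCMOfDisc Δ z ∧ ‖z - τ‖ < ε} : ℝ) ≤
      (Fmax Δ : ℝ) *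
        ((48 + 16 * Real.sqrt 3) / 3 * (((ArithmeticFunction.sigma 1) ftilde : ℝ) / (ftilde : ℝ)) *
            Real.sqrt |(Δ : ℝ)| * ε ^ 2 +
          (12 + 4 * Real.sqrt 3) / 3 * Real.sqrt |(Δ : ℝ)| * ε +
          8 * |(Δ : ℝ)| ^ ((1 : ℝ) / 4) / Real.sqrt (Real.sqrt 3 - 1) *
            ((ArithmeticFunction.sigma 0) ftilde : ℝ) * ε +
          2) :=
  stmt6_general Δ D f hf hfact hD ftilde hft1 hft0 τ hτ ε hε0 hε
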